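/- arXiv:1507.02232 — 6 statements merged into one kernel-verified Lean document; each statement's English description precedes it below -/
import Mathlib

section
/- Let G be a group and define σ : G×G → G×G by σ(x,y) = (x·y⁻¹·x⁻¹, x·y²) (Wada's solution). Then (G,σ) is a biquandle whose associated map is s(x) = x⁻¹. In particular σ is bijective (with inverse σ⁻¹(u,v) = (u²v, v⁻¹u⁻¹v)), satisfies the Yang–Baxter equation, is non-degenerate, and for every x the unique y with σ(x,y) = (x,y) is y = x⁻¹. -/
/-- The map `σ × id` acting on the first two coordinates of `X × X × X`. -/
def mapL {X : Type*} (σ : X × X → X × X) : X × X × X → X × X × X :=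
  fun p => ((σ (p.1, p.2.1)).1, (σ (p.1, p.2.1)).2, p.2.2)

/-- The map `id × σ` acting on the last two coordinates of `X × X × X`. -/
def mapR {X : Type*} (σ : X × X → X × X) : X × X × X → X × X × X :=
  fun p => (p.1, σ p.2)

/-- The Yang–Baxter equation `(id×σ)(σ×id)(id×σ) = (σ×id)(id×σ)(σ×id)`. -/
def YBeq {X : Type*} (σ : X × X → X × X) : Prop :=
  mapR σ ∘ mapL σ ∘ mapR σ = mapL σ ∘ mapR σ ∘ mapL σ

/-- A set-theoretic solution of the Yang–Baxter equation. -/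
def IsYBSol {X : Type*} (σ : X × X → X × X) : Prop :=
  Function.Bijective σ ∧ YBeq σ

/-- Non-degeneracy (left and right invertibility). -/
def IsNondeg {X : Type*} (σ : X × X → X × X) : Prop :=
  (∀ x z : X, ∃! y : X, (σ (x, y)).1 = z) ∧
  (∀ y t : X, ∃! x : X, (σ (x, y)).2 = t)

/-- A birack: non-degenerate set-theoretic solution of the YBeq. -/
def IsBirack {X : Type*} (σ : X × X → X × X) : Prop :=
  IsYBSol σ ∧ IsNondeg σ

/-- A biquandle: a birack where every `x` has a unique `y` with `σ (x,y) = (x,y)`. -/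
def IsBiquandle {X : Type*} (σ : X × X → X × X) : Prop :=
  IsBirack σ ∧ ∀ x : X, ∃! y : X, σ (x, y) = (x, y)

/-- `s` is the associated map of a biquandle: `σ (x, s x) = (x, s x)`. -/
def IsAssocMap {X : Type*} (σ : X × X → X × X) (s : X → X) : Prop :=
  ∀ x : X, σ (x, s x) = (x, s x)

/-- A (braid) non-commutative 2-cocycle on `(X,σ)` with values in a group `H`. -/
def IsCocycle {X H : Type*} [Group H] (σ : X × X → X × X) (f : X × X → H) : Prop :=
  (∀ x y z : X, f (x, y) * f ((σ (x, y)).2, z) =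
      f (x, (σ (y, z)).1) * f ((σ (x, (σ (y, z)).1)).2, (σ (y, z)).2)) ∧
  (∀ x y z : X, f ((σ (x, y)).1, (σ ((σ (x, y)).2, z)).1) = f (y, z))

/-- Type I condition: `f (x, s x) = 1`. -/
def IsTypeI {X H : Type*} [Group H] (s : X → X) (f : X × X → H) : Prop :=
  ∀ x : X, f (x, s x) = 1

/-- Two 2-cocycles are cohomologous. -/
def Cohomologous {X H : Type*} [Group H] (σ : X × X → X × X) (s : X → X)
    (f f' : X × X → H) : Prop :=
  ∃ γ : X → H, (∀ x : X, γ x = γ (s x)) ∧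
    ∀ p : X × X, f' p = γ p.1 * f p * (γ (σ p).2)⁻¹

/-- Relations defining the universal non-commutative 2-cocycle group. -/
def UncRels {X : Type*} (σ : X × X → X × X) (s : X → X) : Set (FreeGroup (X × X)) :=
  {r | (∃ x y z : X, r = FreeGroup.of (x, y) * FreeGroup.of ((σ (x, y)).2, z) *
          (FreeGroup.of (x, (σ (y, z)).1) *
            FreeGroup.of ((σ (x, (σ (y, z)).1)).2, (σ (y, z)).2))⁻¹) ∨
       (∃ x y z : X, r = FreeGroup.of ((σ (x, y)).1, (σ ((σ (x, y)).2, z)).1) *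
          (FreeGroup.of (y, z))⁻¹) ∨
       (∃ x : X, r = FreeGroup.of (x, s x))}

/-- The universal non-commutative 2-cocycle group `U_nc(X,σ)`. -/
abbrev Unc {X : Type*} (σ : X × X → X × X) (s : X → X) : Type _ :=
  PresentedGroup (UncRels σ s)

/-- The universal 2-cocycle `π : X × X → U_nc(X,σ)`. -/
def UncPi {X : Type*} (σ : X × X → X × X) (s : X → X) : X × X → Unc σ s :=
  fun p => PresentedGroup.of (rels := UncRels σ s) p

/-! Every identity needed is an identity in the free group on the arguments: `σ` has the
explicit two-sided inverse `(u, v) ↦ (u² v, v⁻¹ u⁻¹ v)`, its partial maps `y ↦ x y⁻¹ x⁻¹` and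
`x ↦ x y²` are bijections of `G` (conjugation after inversion, right translation), and
`σ (x, y) = (x, y)` forces `x y⁻¹ x⁻¹ = x`, i.e. `y = x⁻¹`. -/

theorem isNondeg_iff_bijective {X : Type*} (σ : X × X → X × X) :
    IsNondeg σ ↔ (∀ x, Function.Bijective fun y => (σ (x, y)).1) ∧
      ∀ y, Function.Bijective fun x => (σ (x, y)).2 := by
  simp only [IsNondeg, Function.bijective_iff_existsUnique]

theorem IsBirack.isBiquandle {X : Type*} {σ : X × X → X × X} (hσ : IsBirack σ) (s : X → X)
    (hfix : ∀ x y, σ (x, y) = (x, y) ↔ y = s x) : IsBiquandle σ :=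
  ⟨hσ, fun x => ⟨s x, (hfix x (s x)).2 rfl, fun y hy => (hfix x y).1 hy⟩⟩

section Wada

variable (G : Type*) [Group G]

def wada : G × G → G × G := fun p => (p.1 * p.2⁻¹ * p.1⁻¹, p.1 * p.2 ^ 2)

def wadaInv : G × G → G × G := fun q => (q.1 ^ 2 * q.2, q.2⁻¹ * q.1⁻¹ * q.2)

variable {G}

@[simp]
theorem wada_apply (x y : G) : wada G (x, y) = (x * y⁻¹ * x⁻¹, x * y ^ 2) := rfl

@[simp]
theorem wadaInv_apply (u v : G) : wadaInv G (u, v) = (u ^ 2 * v, v⁻¹ * u⁻¹ * v) := rfl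

theorem wada_comp_wadaInv : wada G ∘ wadaInv G = id := by
  funext ⟨u, v⟩
  simp only [Function.comp_apply, wadaInv_apply, wada_apply, id_eq, Prod.ext_iff]
  constructor <;> simp only [pow_two] <;> group

theorem wadaInv_comp_wada : wadaInv G ∘ wada G = id := by
  funext ⟨x, y⟩
  simp only [Function.comp_apply, wadaInv_apply, wada_apply, id_eq, Prod.ext_iff]
  constructor <;> simp only [pow_two] <;> group

theorem wada_bijective : Function.Bijective (wada G) :=
  Function.bijective_iff_has_inverse.2
    ⟨wadaInv G, congrFun wadaInv_comp_wada, congrFun wada_comp_wadaInv⟩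

theorem yBeq_wada : YBeq (wada G) := by
  funext ⟨x, y, z⟩
  simp only [mapL, mapR, Function.comp_apply, wada_apply, Prod.ext_iff]
  refine ⟨?_, ?_, ?_⟩ <;> simp only [pow_two] <;> group

theorem isNondeg_wada : IsNondeg (wada G) :=
  (isNondeg_iff_bijective _).2
    ⟨fun x => (MulAut.conj x).bijective.comp inv_involutive.bijective,
      fun y => (Equiv.mulRight (y ^ 2)).bijective⟩

theorem isBirack_wada : IsBirack (wada G) :=
  ⟨⟨wada_bijective, yBeq_wada⟩, isNondeg_wada⟩

theorem wada_eq_self_iff (x y : G) : wada G (x, y) = (x, y) ↔ y = x⁻¹ := by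
  constructor
  · intro h
    have hconj : x * y⁻¹ * x⁻¹ = x := congrArg Prod.fst h
    have hinv : y⁻¹ = x := (MulAut.conj x).injective <| by
      rw [MulAut.conj_apply, MulAut.conj_apply, hconj, mul_inv_cancel_right]
    exact inv_eq_iff_eq_inv.1 hinv
  · rintro rfl
    simp only [wada_apply, Prod.ext_iff]
    constructor <;> group

theorem isAssocMap_wada : IsAssocMap (wada G) (fun x => x⁻¹) :=
  fun x => (wada_eq_self_iff x x⁻¹).2 rfl

theorem isBiquandle_wada : IsBiquandle (wada G) :=
  isBirack_wada.isBiquandle _ wada_eq_self_iff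

end Wada

/-- Wada's solution `σ(x,y) = (x y⁻¹ x⁻¹, x y²)` on a group `G` is a biquandle with
associated map `s(x) = x⁻¹`; its inverse is `σ⁻¹(u,v) = (u² v, v⁻¹ u⁻¹ v)`, and for
each `x` the unique `y` with `σ(x,y) = (x,y)` is `y = x⁻¹`. -/
theorem wada_biquandle {G : Type*} [Group G] :
    IsBiquandle (fun p : G × G => (p.1 * p.2⁻¹ * p.1⁻¹, p.1 * p.2 ^ 2)) ∧
    IsAssocMap (fun p : G × G => (p.1 * p.2⁻¹ * p.1⁻¹, p.1 * p.2 ^ 2))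
      (fun x : G => x⁻¹) ∧
    ((fun p : G × G => (p.1 * p.2⁻¹ * p.1⁻¹, p.1 * p.2 ^ 2)) ∘
        (fun q : G × G => (q.1 ^ 2 * q.2, q.2⁻¹ * q.1⁻¹ * q.2)) = id ∧
      (fun q : G × G => (q.1 ^ 2 * q.2, q.2⁻¹ * q.1⁻¹ * q.2)) ∘
        (fun p : G × G => (p.1 * p.2⁻¹ * p.1⁻¹, p.1 * p.2 ^ 2)) = id) ∧
    (∀ x y : G,
      (fun p : G × G => (p.1 * p.2⁻¹ * p.1⁻¹, p.1 * p.2 ^ 2)) (x, y) = (x, y) →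
        y = x⁻¹) :=
  ⟨isBiquandle_wada, isAssocMap_wada, ⟨wada_comp_wadaInv, wadaInv_comp_wada⟩,
    fun x y => (wada_eq_self_iff x y).1⟩
end

section
/- Let (X,◁) be a quandle and σ̄ : X×X → X×X the inverse of σ(x,y) = (y, x◁y), i.e. σ̄(x,y) = (y◁⁻¹x, x), a biquandle whose associated map is the identity. For a group H, a function f : X×X → H is a type I non-commutative 2-cocycle for (X,σ̄) if and only if it satisfies, for all x,y,z ∈ X: (Q̄1) f(x,y)·f(x,z) = f(x◁y,z)·f(x,y); (Q̄2) f(x◁y,x) = 1; (Q̄3) f(x◁z,y◁z) = f(x,y). -/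
/-- A rack structure given by a binary operation. -/
def IsRack {X : Type*} (op : X → X → X) : Prop :=
  (∀ x : X, Function.Bijective (fun y => op y x)) ∧
  ∀ x y z : X, op (op x y) z = op (op x z) (op y z)

/-- A quandle: a rack with `x ◁ x = x`. -/
def IsQuandle {X : Type*} (op : X → X → X) : Prop :=
  IsRack op ∧ ∀ x : X, op x x = x

/-! Condition (ii) for `σ̄` is invariance of `f` under every `(- ◁⁻¹ x)`, equivalently (Q̄3).
Under (Q̄3), `f (x ◁ y, z) = f (x, z ◁⁻¹ y)` turns condition (i) into (Q̄1), and (Q̄1) at `z = x`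
makes type I equivalent to (Q̄2). -/

section InverseSolution

variable {X H : Type*} {op invop : X → X → X} {f : X × X → H}

theorem isCocycle_inverseSolution_iff [Group H] :
    IsCocycle (fun p : X × X => (invop p.2 p.1, p.1)) f ↔
      (∀ x y z : X, f (x, y) * f (x, z) = f (x, invop z y) * f (x, y)) ∧
        ∀ x y z : X, f (invop y x, invop z x) = f (y, z) :=
  Iff.rfl

theorem invop_invariant_iff_op_invariant (hl : ∀ x y : X, op (invop y x) x = y)
    (hr : ∀ x y : X, invop (op y x) x = y) :
    (∀ x y z : X, f (invop y x, invop z x) = f (y, z)) ↔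
      ∀ x y z : X, f (op x z, op y z) = f (x, y) := by
  constructor
  · intro h x y z
    simpa only [hr] using (h z (op x z) (op y z)).symm
  · intro h x y z
    simpa only [hl] using (h (invop y x) (invop z x) x).symm

theorem apply_op_left_eq_apply_invop_right (hl : ∀ x y : X, op (invop y x) x = y)
    (h3 : ∀ x y z : X, f (op x z, op y z) = f (x, y)) (x y z : X) :
    f (op x y, z) = f (x, invop z y) := by
  simpa only [hl] using h3 x (invop z y) y

theorem invop_cocycle_cond_iff_op_cocycle_cond [Group H] (hl : ∀ x y : X, op (invop y x) x = y)
    (h3 : ∀ x y z : X, f (op x z, op y z) = f (x, y)) :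
    (∀ x y z : X, f (x, y) * f (x, z) = f (x, invop z y) * f (x, y)) ↔
      ∀ x y z : X, f (x, y) * f (x, z) = f (op x y, z) * f (x, y) := by
  simp only [apply_op_left_eq_apply_invop_right hl h3]

theorem isTypeI_id_iff [Group H] (hidem : ∀ x : X, op x x = x)
    (h1 : ∀ x y z : X, f (x, y) * f (x, z) = f (op x y, z) * f (x, y)) :
    IsTypeI (id : X → X) f ↔ ∀ x y : X, f (op x y, x) = 1 := by
  constructor
  · intro ht x y
    have h := h1 x y x
    rw [show f (x, x) = 1 from ht x, mul_one] at h
    exact right_eq_mul.mp h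
  · intro h2 x
    simpa only [id, hidem] using h2 x x

end InverseSolution

/-- For a quandle `(X,◁)` and the inverse solution `σ̄(x,y) = (y ◁⁻¹ x, x)` (with
associated map the identity), a function `f : X × X → H` is a type I
non-commutative 2-cocycle iff it satisfies (Q̄1), (Q̄2), (Q̄3). -/
theorem inverse_quandle_cocycle_iff {X H : Type*} [Group H]
    (op invop : X → X → X) (hq : IsQuandle op)
    (hinv : ∀ x y : X, op (invop y x) x = y ∧ invop (op y x) x = y)
    (f : X × X → H) :
    (IsCocycle (fun p : X × X => (invop p.2 p.1, p.1)) f ∧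
        IsTypeI (id : X → X) f) ↔
      ((∀ x y z : X, f (x, y) * f (x, z) = f (op x y, z) * f (x, y)) ∧
        (∀ x y : X, f (op x y, x) = 1) ∧
        (∀ x y z : X, f (op x z, op y z) = f (x, y))) := by
  have hl : ∀ x y : X, op (invop y x) x = y := fun x y => (hinv x y).1
  have hr : ∀ x y : X, invop (op y x) x = y := fun x y => (hinv x y).2
  rw [isCocycle_inverseSolution_iff, invop_invariant_iff_op_invariant hl hr]
  constructor
  · rintro ⟨⟨h1, h3⟩, ht⟩
    have h1' := (invop_cocycle_cond_iff_op_cocycle_cond hl h3).1 h1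
    exact ⟨h1', (isTypeI_id_iff hq.2 h1').1 ht, h3⟩
  · rintro ⟨h1, h2, h3⟩
    exact ⟨⟨(invop_cocycle_cond_iff_op_cocycle_cond hl h3).2 h1, h3⟩,
      (isTypeI_id_iff hq.2 h1).2 h2⟩
end

section
/- Let (X,◁) be a quandle such that for all x,z ∈ X there exists y ∈ X with x◁y = z, and let H be a group. Then every function f : X×X → H satisfying, for all x,y,z ∈ X, (Q̄1) f(x,y)·f(x,z) = f(x◁y,z)·f(x,y), (Q̄2) f(x◁y,x) = 1, and (Q̄3) f(x◁z,y◁z) = f(x,y), is identically 1. Equivalently, every type I non-commutative 2-cocycle for the inverse solution σ̄(x,y) = (y◁⁻¹x, x) is trivial. -/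
/-! Condition (Q̄2) already forces triviality once every `a` can be written as `b ◁ y`: then
`f (a, b) = f (b ◁ y, b) = 1`. For the inverse solution `σ̄`, the first cocycle identity at
`(x, y, x)` reads `f (x, y) * f (x, x) = f (x, x ◁⁻¹ y) * f (x, y)`, so by the type I condition
`f (x, x ◁⁻¹ y) = 1`; putting `x := u ◁ y` turns this into (Q̄2). -/

theorem eq_one_of_apply_op_eq_one {X H : Type*} [One H] {op : X → X → X}
    (hsurj : ∀ x z : X, ∃ y : X, op x y = z) {f : X × X → H}
    (hf : ∀ x y : X, f (op x y, x) = 1) (p : X × X) : f p = 1 := by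
  obtain ⟨a, b⟩ := p
  obtain ⟨y, rfl⟩ := hsurj b a
  exact hf b y

theorem IsCocycle.apply_invop_eq_one {X H : Type*} [Group H] {invop : X → X → X}
    {f : X × X → H} (hc : IsCocycle (fun p : X × X => (invop p.2 p.1, p.1)) f)
    (ht : IsTypeI (id : X → X) f) (x y : X) : f (x, invop x y) = 1 := by
  have h := hc.1 x y x
  dsimp only at h
  rw [show f (x, x) = 1 from ht x, mul_one] at h
  exact right_eq_mul.mp h

theorem inverse_quandle_cocycle_trivial_general {X H : Type*} [Group H]
    (op invop : X → X → X)
    (hinv : ∀ x y : X, op (invop y x) x = y ∧ invop (op y x) x = y)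
    (hsurj : ∀ x z : X, ∃ y : X, op x y = z) :
    (∀ f : X × X → H,
      ((∀ x y z : X, f (x, y) * f (x, z) = f (op x y, z) * f (x, y)) ∧
        (∀ x y : X, f (op x y, x) = 1) ∧
        (∀ x y z : X, f (op x z, op y z) = f (x, y))) →
      ∀ p : X × X, f p = 1) ∧
    (∀ f : X × X → H,
      IsCocycle (fun p : X × X => (invop p.2 p.1, p.1)) f →
      IsTypeI (id : X → X) f →
      ∀ p : X × X, f p = 1) := by
  refine ⟨fun f ⟨_, hQ2, _⟩ => eq_one_of_apply_op_eq_one hsurj hQ2, fun f hc ht => ?_⟩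
  refine eq_one_of_apply_op_eq_one hsurj fun x y => ?_
  simpa only [(hinv y x).2] using hc.apply_invop_eq_one ht (op x y) y

/-- If the quandle `(X,◁)` satisfies: for all `x z` there is `y` with `x ◁ y = z`,
then every function satisfying (Q̄1), (Q̄2), (Q̄3) is identically `1`; equivalently,
every type I non-commutative 2-cocycle for the inverse solution
`σ̄(x,y) = (y ◁⁻¹ x, x)` is trivial. -/
theorem inverse_quandle_cocycle_trivial {X H : Type*} [Group H]
    (op invop : X → X → X) (hq : IsQuandle op)
    (hinv : ∀ x y : X, op (invop y x) x = y ∧ invop (op y x) x = y)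
    (hsurj : ∀ x z : X, ∃ y : X, op x y = z) :
    (∀ f : X × X → H,
      ((∀ x y z : X, f (x, y) * f (x, z) = f (op x y, z) * f (x, y)) ∧
        (∀ x y : X, f (op x y, x) = 1) ∧
        (∀ x y z : X, f (op x z, op y z) = f (x, y))) →
      ∀ p : X × X, f p = 1) ∧
    (∀ f : X × X → H,
      IsCocycle (fun p : X × X => (invop p.2 p.1, p.1)) f →
      IsTypeI (id : X → X) f →
      ∀ p : X × X, f p = 1) :=
  inverse_quandle_cocycle_trivial_general op invop hinv hsurj
end

section
/- Let R be a commutative ring, s,t ∈ R units such that c := (1−s·t)⁻¹ exists in R, M an R-module, and σ(x,y) = (s·y, t·x + (1−s·t)·y) the Alexander biquandle on M. Let H be a group and f : M×M → H a type I non-commutative 2-cocycle. Then the function γ : M → H, γ(x) = f(0, c·x), satisfies γ(x) = γ(s⁻¹·x) for all x, and the cohomologous cocycle f'(x,y) = γ(x)·f(x,y)·γ(σ²(x,y))⁻¹ satisfies f'(0,y) = 1 for all y ∈ M. In particular, every type I non-commutative 2-cocycle on (M,σ) is cohomologous to one vanishing on {0}×M. -/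
/-- The Alexander biquandle (Alexander switch) on an `R`-module `M`. -/
def alexSigma {R : Type*} [CommRing R] {M : Type*} [AddCommGroup M] [Module R M]
    (s t : Rˣ) : M × M → M × M :=
  fun p => ((s : R) • p.2, (t : R) • p.1 + (1 - (s : R) * (t : R)) • p.2)

/-- The associated map of the Alexander biquandle: `x ↦ s⁻¹ • x`. -/
def alexS {R : Type*} [CommRing R] {M : Type*} [AddCommGroup M] [Module R M]
    (s : Rˣ) : M → M :=
  fun x => (((s⁻¹ : Rˣ) : R)) • x

/-!
Twisting a cocycle by a gauge `γ` with `γ (σ (x, y)).1 = γ y` yields a cocycle again, because the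
Yang–Baxter equation matches up the second outputs of `σ` occurring in both cocycle identities.
For the Alexander switch, identity (ii) at `x = 0` reads `f (s y, s z) = f (y, z)`, so
`γ x = f (0, c x)` is such a gauge; since `σ²(0, y) = (1 - s t) y`, it cancels `f (0, y)`.
-/

section GaugeTwist

variable {X H : Type*} [Group H]

lemma YBeq.snd_snd {σ : X × X → X × X} (h : YBeq σ) (x y z : X) :
    (σ ((σ (x, (σ (y, z)).1)).2, (σ (y, z)).2)).2 = (σ ((σ (x, y)).2, z)).2 :=
  congrArg (fun p => p.2.2) (congrFun h (x, y, z))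

lemma YBeq.snd_fst {σ : X × X → X × X} (h : YBeq σ) (x y z : X) :
    (σ ((σ (x, (σ (y, z)).1)).2, (σ (y, z)).2)).1 =
      (σ ((σ (x, y)).1, (σ ((σ (x, y)).2, z)).1)).2 :=
  congrArg (fun p => p.2.1) (congrFun h (x, y, z))

def gaugeTwist (σ : X × X → X × X) (γ : X → H) (f : X × X → H) : X × X → H :=
  fun p => γ p.1 * f p * (γ (σ p).2)⁻¹

lemma isCocycle_gaugeTwist {σ : X × X → X × X} {f : X × X → H} (hf : IsCocycle σ f)
    (hσ : YBeq σ) {γ : X → H} (hγ : ∀ x y, γ (σ (x, y)).1 = γ y) :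
    IsCocycle σ (gaugeTwist σ γ f) := by
  constructor
  · intro x y z
    simp only [gaugeTwist, hσ.snd_snd]
    calc γ x * f (x, y) * (γ (σ (x, y)).2)⁻¹ *
            (γ (σ (x, y)).2 * f ((σ (x, y)).2, z) * (γ (σ ((σ (x, y)).2, z)).2)⁻¹)
        = γ x * (f (x, y) * f ((σ (x, y)).2, z)) * (γ (σ ((σ (x, y)).2, z)).2)⁻¹ := by
          group
      _ = _ := by rw [hf.1 x y z]; group
  · intro x y z
    simp only [gaugeTwist, hf.2, ← hσ.snd_fst, hγ]

lemma isTypeI_gaugeTwist {σ : X × X → X × X} {s : X → X} {f : X × X → H}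
    (hf : IsTypeI s f) (hs : IsAssocMap σ s) {γ : X → H} (hγ : ∀ x, γ x = γ (s x)) :
    IsTypeI s (gaugeTwist σ γ f) := by
  intro x
  simp only [gaugeTwist, hs x, hf x, mul_one, ← hγ x, mul_inv_cancel]

lemma cohomologous_gaugeTwist (σ : X × X → X × X) {s : X → X} (f : X × X → H) {γ : X → H}
    (hγ : ∀ x, γ x = γ (s x)) : Cohomologous σ s f (gaugeTwist σ γ f) :=
  ⟨γ, hγ, fun _ => rfl⟩

end GaugeTwist

section Alexander

variable {R : Type*} [CommRing R] {M : Type*} [AddCommGroup M] [Module R M]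

lemma alexSigma_yBeq (s t : Rˣ) : YBeq (alexSigma (M := M) s t) := by
  funext ⟨x, y, z⟩
  simp only [Function.comp_apply, mapL, mapR, alexSigma, Prod.mk.injEq]
  refine ⟨trivial, ?_, ?_⟩ <;> module

lemma alexSigma_isAssocMap (s t : Rˣ) : IsAssocMap (alexSigma (M := M) s t) (alexS s) := by
  intro x
  simp only [alexSigma, alexS, smul_smul, Units.mul_inv, one_smul, ← add_smul, Prod.mk.injEq,
    true_and]
  congr 1
  linear_combination -(t : R) * Units.mul_inv s

variable {H : Type*} [Group H] {s t : Rˣ} {f : M × M → H}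

lemma IsCocycle.alexSigma_smul (hf : IsCocycle (alexSigma (M := M) s t) f) (y z : M) :
    f ((s : R) • y, (s : R) • z) = f (y, z) := by
  simpa [alexSigma] using hf.2 0 y z

lemma IsCocycle.alexSigma_gauge_smul (hf : IsCocycle (alexSigma (M := M) s t) f) (c : R)
    (y : M) : f (0, c • (s : R) • y) = f (0, c • y) := by
  rw [smul_comm, ← hf.alexSigma_smul 0 (c • y), smul_zero]

lemma IsCocycle.alexSigma_gauge_alexS (hf : IsCocycle (alexSigma (M := M) s t) f) (c : R)
    (x : M) : f (0, c • x) = f (0, c • alexS s x) := by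
  rw [← hf.alexSigma_gauge_smul c (alexS s x), alexS, ← Units.smul_def, ← Units.smul_def,
    smul_inv_smul]

lemma IsTypeI.alexS_zero (hf : IsTypeI (alexS (M := M) s) f) : f (0, 0) = 1 := by
  simpa [alexS] using hf 0

lemma IsTypeI.gaugeTwist_alexSigma_zero_left (hf : IsTypeI (alexS (M := M) s) f) {c : R}
    (hc : c * (1 - (s : R) * (t : R)) = 1) (y : M) :
    gaugeTwist (alexSigma s t) (fun x => f (0, c • x)) f (0, y) = 1 := by
  simp only [gaugeTwist, alexSigma, smul_zero, zero_add, smul_smul, hc, one_smul,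
    hf.alexS_zero, one_mul, mul_inv_cancel]

end Alexander

/-- For the Alexander biquandle with `c = (1 − st)⁻¹`: `γ(x) = f(0, c•x)` satisfies
`γ(x) = γ(s⁻¹•x)`, the cohomologous cocycle `f'(x,y) = γ(x) f(x,y) γ(σ²(x,y))⁻¹`
vanishes on `{0} × M`; in particular every type I non-commutative 2-cocycle is
cohomologous to one vanishing on `{0} × M`. -/
theorem alexander_gamma_reduction {R : Type*} [CommRing R] (s t : Rˣ) (c : R)
    (hc : c * (1 - (s : R) * (t : R)) = 1)
    (M : Type*) [AddCommGroup M] [Module R M]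
    {H : Type*} [Group H] (f : M × M → H)
    (hf : IsCocycle (alexSigma (M := M) s t) f)
    (hf1 : IsTypeI (alexS (M := M) s) f) :
    (∀ x : M, f (0, c • x) = f (0, c • alexS (M := M) s x)) ∧
    (∀ y : M,
      f (0, c • (0 : M)) * f (0, y) *
        (f (0, c • (alexSigma (M := M) s t (0, y)).2))⁻¹ = 1) ∧
    ∃ f' : M × M → H,
      IsCocycle (alexSigma (M := M) s t) f' ∧
      IsTypeI (alexS (M := M) s) f' ∧
      Cohomologous (alexSigma (M := M) s t) (alexS (M := M) s) f f' ∧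
      ∀ y : M, f' (0, y) = 1 := by
  have hγ := hf.alexSigma_gauge_alexS c
  exact ⟨hγ, hf1.gaugeTwist_alexSigma_zero_left hc, _,
    isCocycle_gaugeTwist hf (alexSigma_yBeq s t) fun _ => hf.alexSigma_gauge_smul c,
    isTypeI_gaugeTwist hf1 (alexSigma_isAssocMap s t) hγ, cohomologous_gaugeTwist _ f hγ,
    hf1.gaugeTwist_alexSigma_zero_left hc⟩
end

section
/- Let X be a set with exactly three elements and σ : X×X → X×X the flip σ(x,y) = (y,x), a biquandle whose associated map is the identity. Then U_nc(X,σ) is isomorphic to the free product (ℤ×ℤ) * (ℤ×ℤ) * (ℤ×ℤ) of three copies of the free abelian group of rank 2. -/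
/-!
For the flip `σ(x,y) = (y,x)` with `s = id`, relation (Unc2) is trivial, (Unc1) says that
`(x,y)` and `(x,z)` commute, and (Unc3) kills `(x,x)`. Hence the generators `(x,y)` with first
coordinate `x` span a free abelian group on `X ∖ {x}`, and distinct `x` do not interact: `U_nc` is
the free product over `x ∈ X` of these groups. When `|X| = 3` each factor is `ℤ × ℤ`, generated
by `(x, x + 1)` and `(x, x + 2)` once `X` is identified with `Fin 3`.
-/

open Monoid

namespace Commute

variable {G : Type*} [Group G] {a b : G}

def zpowPairHom (h : Commute a b) : Multiplicative (ℤ × ℤ) →* G where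
  toFun m := a ^ m.toAdd.1 * b ^ m.toAdd.2
  map_one' := by simp
  map_mul' m n := by
    simp only [toAdd_mul, Prod.fst_add, Prod.snd_add, zpow_add]
    exact (h.zpow_zpow n.toAdd.1 m.toAdd.2).mul_mul_mul_comm _ _

theorem zpowPairHom_apply (h : Commute a b) (m : Multiplicative (ℤ × ℤ)) :
    h.zpowPairHom m = a ^ m.toAdd.1 * b ^ m.toAdd.2 := rfl

end Commute

theorem Multiplicative.intProd_eq_zpow_mul_zpow (m : Multiplicative (ℤ × ℤ)) :
    m = ofAdd ((1 : ℤ), (0 : ℤ)) ^ m.toAdd.1 * ofAdd ((0 : ℤ), (1 : ℤ)) ^ m.toAdd.2 := by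
  apply Multiplicative.toAdd.injective
  simp

theorem Multiplicative.intProd_hom_ext {G : Type*} [Group G] {f g : Multiplicative (ℤ × ℤ) →* G}
    (h₁ : f (.ofAdd (1, 0)) = g (.ofAdd (1, 0))) (h₂ : f (.ofAdd (0, 1)) = g (.ofAdd (0, 1))) :
    f = g :=
  MonoidHom.ext fun m => by
    rw [Multiplicative.intProd_eq_zpow_mul_zpow m]
    simp only [map_mul, map_zpow, h₁, h₂]

theorem unc_hom_ext {X G : Type*} [Group G] {σ : X × X → X × X} {s : X → X}
    {f g : Unc σ s →* G} (h : ∀ p, f (UncPi σ s p) = g (UncPi σ s p)) : f = g :=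
  PresentedGroup.ext h

section Swap

variable {X : Type*}

theorem uncPi_swap_self (x : X) : UncPi Prod.swap id (x, x) = 1 :=
  (QuotientGroup.eq_one_iff _).mpr <| Subgroup.subset_normalClosure <| Or.inr <| Or.inr ⟨x, rfl⟩

theorem uncPi_swap_commute (x y z : X) :
    Commute (UncPi Prod.swap id (x, y)) (UncPi Prod.swap id (x, z)) :=
  mul_inv_eq_one.mp <| (QuotientGroup.eq_one_iff _).mpr <|
    Subgroup.subset_normalClosure <| Or.inl ⟨x, y, z, rfl⟩

variable {G : Type*} [Group G] (f : X × X → G)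

def uncSwapLift (hdiag : ∀ x, f (x, x) = 1) (hcomm : ∀ x y z, Commute (f (x, y)) (f (x, z))) :
    Unc Prod.swap (id : X → X) →* G :=
  PresentedGroup.toGroup (f := f) <| by
    rintro r (⟨x, y, z, rfl⟩ | ⟨x, y, z, rfl⟩ | ⟨x, rfl⟩)
    · simpa only [map_mul, map_inv, FreeGroup.lift_apply_of, Prod.swap_prod_mk, mul_inv_eq_one]
        using (hcomm x y z).eq
    · simp
    · simpa using hdiag x

theorem uncSwapLift_uncPi (hdiag : ∀ x, f (x, x) = 1)
    (hcomm : ∀ x y z, Commute (f (x, y)) (f (x, z))) (p : X × X) :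
    uncSwapLift f hdiag hcomm (UncPi Prod.swap id p) = f p :=
  PresentedGroup.toGroup.of _

end Swap

namespace SwapThree

variable {X : Type*} (e : X ≃ Fin 3)

abbrev FreeProd := CoprodI (fun _ : Fin 3 => Multiplicative (ℤ × ℤ))

def generatorImage : Fin 3 → Multiplicative (ℤ × ℤ) :=
  ![1, .ofAdd (1, 0), .ofAdd (0, 1)]

def cocycle (p : X × X) : FreeProd := CoprodI.of (i := e p.1) (generatorImage (e p.2 - e p.1))

theorem cocycle_self (x : X) : cocycle e (x, x) = 1 := by
  simp [cocycle, generatorImage]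

theorem cocycle_commute (x y z : X) : Commute (cocycle e (x, y)) (cocycle e (x, z)) :=
  (Commute.all _ _).map CoprodI.of

def toFreeProd : Unc Prod.swap (id : X → X) →* FreeProd :=
  uncSwapLift (cocycle e) (cocycle_self e) (cocycle_commute e)

def factorHom (i : Fin 3) : Multiplicative (ℤ × ℤ) →* Unc Prod.swap (id : X → X) :=
  (uncPi_swap_commute (e.symm i) (e.symm (i + 1)) (e.symm (i + 2))).zpowPairHom

def ofFreeProd : FreeProd →* Unc Prod.swap (id : X → X) := CoprodI.lift (factorHom e)

theorem toFreeProd_uncPi (i d : Fin 3) :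
    toFreeProd e (UncPi Prod.swap id (e.symm i, e.symm (i + d))) =
      CoprodI.of (i := i) (generatorImage d) := by
  rw [toFreeProd, uncSwapLift_uncPi]
  simp [cocycle]

theorem ofFreeProd_comp_toFreeProd : (ofFreeProd e).comp (toFreeProd e) = .id _ := by
  refine unc_hom_ext fun ⟨x, y⟩ => ?_
  obtain ⟨i, d, rfl, rfl⟩ : ∃ i d : Fin 3, e.symm i = x ∧ e.symm (i + d) = y :=
    ⟨e x, e y - e x, by simp, by simp⟩
  simp only [MonoidHom.comp_apply, MonoidHom.id_apply, toFreeProd_uncPi, ofFreeProd,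
    CoprodI.lift_of, factorHom, Commute.zpowPairHom_apply]
  fin_cases d <;> simp [generatorImage, uncPi_swap_self]

theorem toFreeProd_comp_ofFreeProd : (toFreeProd e).comp (ofFreeProd e) = .id _ := by
  refine CoprodI.ext_hom _ _ fun i => Multiplicative.intProd_hom_ext ?_ ?_ <;>
  · simp only [MonoidHom.comp_apply, ofFreeProd, CoprodI.lift_of, factorHom,
      Commute.zpowPairHom_apply]
    exact toFreeProd_uncPi e i _

end SwapThree

/-- For the flip biquandle on a three-element set, `U_nc` is the free product of
three copies of `ℤ × ℤ`. -/
theorem unc_flip_three (X : Type) [Fintype X] (hX : Fintype.card X = 3) :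
    Nonempty (Unc (fun p : X × X => (p.2, p.1)) (id : X → X) ≃*
      Monoid.CoprodI (fun _ : Fin 3 => Multiplicative (ℤ × ℤ))) := by
  let e : X ≃ Fin 3 := Fintype.equivFinOfCardEq hX
  exact ⟨MonoidHom.toMulEquiv (SwapThree.toFreeProd e) (SwapThree.ofFreeProd e)
    (SwapThree.ofFreeProd_comp_toFreeProd e) (SwapThree.toFreeProd_comp_ofFreeProd e)⟩
end

section
/- Let X = ℤ/3ℤ and σ(x,y) = (y, 2y−x) (the biquandle coming from the dihedral quandle D_3, whose associated map is the identity). Then U_nc(X,σ) is isomorphic to the free group on two generators. -/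
/-!
For `σ(x,y) = (y, 2y - x)` on `ℤ/3ℤ` the relation (Unc2) is vacuous and (Unc1) reads
`(x,y)(2y-x,z) = (x,z)(2z-x,2z-y)`. Together with `(x,x) = 1`, four instances of it express
every generator through `a = (0,1)` and `c = (1,0)`:
`(0,2) = a c⁻¹`, `(2,0) = c⁻¹`, `(1,2) = c a⁻¹`, `(2,1) = a⁻¹`.
Conversely this table is a type I cocycle with values in the free group on `a` and `c`, so the
map it induces on `U_nc` is inverse to the one sending the free generators to `a` and `c`.
-/

section

variable {X H K : Type*} [Group H] [Group K] {f : X × X → H}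

theorem IsCocycle.comp {σ : X × X → X × X} (hf : IsCocycle σ f) (φ : H →* K) :
    IsCocycle σ (φ ∘ f) :=
  ⟨fun x y z => by simp only [Function.comp_apply, ← map_mul, hf.1 x y z],
    fun x y z => congrArg φ (hf.2 x y z)⟩

theorem IsTypeI.comp {s : X → X} (hs : IsTypeI s f) (φ : H →* K) : IsTypeI s (φ ∘ f) :=
  fun x => by simp only [Function.comp_apply, hs x, map_one]

end

namespace Unc

variable {X : Type*} {σ : X × X → X × X} {s : X → X} {H : Type*} [Group H]

theorem isCocycle_uncPi : IsCocycle σ (UncPi σ s) :=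
  ⟨fun x y z => PresentedGroup.mk_eq_mk_of_mul_inv_mem (Or.inl ⟨x, y, z, rfl⟩),
    fun x y z => PresentedGroup.mk_eq_mk_of_mul_inv_mem (Or.inr (Or.inl ⟨x, y, z, rfl⟩))⟩

theorem isTypeI_uncPi : IsTypeI s (UncPi σ s) :=
  fun x => PresentedGroup.one_of_mem (Or.inr (Or.inr ⟨x, rfl⟩))

def lift (f : X × X → H) (hf : IsCocycle σ f) (hs : IsTypeI s f) : Unc σ s →* H :=
  PresentedGroup.toGroup (f := f) <| by
    rintro r (⟨x, y, z, rfl⟩ | ⟨x, y, z, rfl⟩ | ⟨x, rfl⟩) <;>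
      simp only [map_mul, map_inv, FreeGroup.lift_apply_of, mul_inv_eq_one]
    exacts [hf.1 x y z, hf.2 x y z, hs x]

@[simp]
theorem lift_uncPi (f : X × X → H) (hf : IsCocycle σ f) (hs : IsTypeI s f) (p : X × X) :
    lift f hf hs (UncPi σ s p) = f p :=
  PresentedGroup.toGroup.of _

theorem hom_ext {φ ψ : Unc σ s →* H} (h : ∀ p, φ (UncPi σ s p) = ψ (UncPi σ s p)) : φ = ψ :=
  PresentedGroup.ext h

end Unc

namespace DihedralThree

abbrev σ : ZMod 3 × ZMod 3 → ZMod 3 × ZMod 3 := fun q => (q.2, 2 * q.2 - q.1)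

-- `ZMod 3` is `Fin 3` by definition, so the table can be indexed by it directly.
def freeCocycle (p : ZMod 3 × ZMod 3) : FreeGroup (Fin 2) :=
  let a := FreeGroup.of 0
  let c := FreeGroup.of 1
  ![![1, a, a * c⁻¹], ![c, 1, c * a⁻¹], ![c⁻¹, a⁻¹, 1]] p.1 p.2

theorem isCocycle_freeCocycle : IsCocycle σ freeCocycle := by
  unfold IsCocycle; decide

theorem isTypeI_freeCocycle : IsTypeI id freeCocycle := by
  unfold IsTypeI; decide

theorem typeI_cocycle_values {H : Type*} [Group H] {f : ZMod 3 × ZMod 3 → H}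
    (hf : IsCocycle σ f) (hs : IsTypeI id f) :
    f (0, 2) = f (0, 1) * (f (1, 0))⁻¹ ∧ f (2, 0) = (f (1, 0))⁻¹ ∧
      f (1, 2) = f (1, 0) * (f (0, 1))⁻¹ ∧ f (2, 1) = (f (0, 1))⁻¹ := by
  have diag : ∀ x, f (x, x) = 1 := hs
  have h012 : f (0, 1) * f (2, 2) = f (0, 2) * f (1, 0) := hf.1 0 1 2
  have h021 : f (0, 2) * f (1, 1) = f (0, 1) * f (2, 0) := hf.1 0 2 1
  have h102 : f (1, 0) * f (2, 2) = f (1, 2) * f (0, 1) := hf.1 1 0 2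
  have h120 : f (1, 2) * f (0, 0) = f (1, 0) * f (2, 1) := hf.1 1 2 0
  rw [diag, mul_one] at h012 h021 h102 h120
  have h02 : f (0, 2) = f (0, 1) * (f (1, 0))⁻¹ := eq_mul_inv_of_mul_eq h012.symm
  have h12 : f (1, 2) = f (1, 0) * (f (0, 1))⁻¹ := eq_mul_inv_of_mul_eq h102.symm
  refine ⟨h02, ?_, h12, ?_⟩
  · rw [h02] at h021
    exact (mul_left_cancel h021).symm
  · rw [h12] at h120
    exact (mul_left_cancel h120).symm

theorem cocycle_ext {H : Type*} [Group H] {f f' : ZMod 3 × ZMod 3 → H}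
    (hf : IsCocycle σ f) (hs : IsTypeI id f) (hf' : IsCocycle σ f') (hs' : IsTypeI id f')
    (h01 : f (0, 1) = f' (0, 1)) (h10 : f (1, 0) = f' (1, 0)) : f = f' := by
  obtain ⟨h02, h20, h12, h21⟩ := typeI_cocycle_values hf hs
  obtain ⟨h02', h20', h12', h21'⟩ := typeI_cocycle_values hf' hs'
  have diag : ∀ x, f (x, x) = f' (x, x) := fun x => (hs x).trans (hs' x).symm
  have cases3 : ∀ x : ZMod 3, x = 0 ∨ x = 1 ∨ x = 2 := by decide
  funext ⟨x, y⟩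
  rcases cases3 x with rfl | rfl | rfl <;> rcases cases3 y with rfl | rfl | rfl <;>
    simp only [diag, h01, h10, h02, h20, h12, h21, h02', h20', h12', h21']

end DihedralThree

/-- For the dihedral quandle biquandle `σ(x,y) = (y, 2y−x)` on `ℤ/3ℤ` (associated
map the identity), `U_nc` is free on two generators. -/
theorem unc_dihedral_zmod3 :
    Nonempty (Unc (fun q : ZMod 3 × ZMod 3 => (q.2, 2 * q.2 - q.1))
      (id : ZMod 3 → ZMod 3) ≃* FreeGroup (Fin 2)) := by
  open DihedralThree in
  let φ := Unc.lift freeCocycle isCocycle_freeCocycle isTypeI_freeCocycle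
  let ψ := FreeGroup.lift ![UncPi σ id (0, 1), UncPi σ id (1, 0)]
  have hφ : ∀ p, φ (UncPi σ id p) = freeCocycle p := Unc.lift_uncPi _ _ _
  -- `freeCocycle (0, 1) = of 0`, `freeCocycle (1, 0) = of 1` and `ψ (of i)` all unfold by `rfl`.
  refine ⟨MonoidHom.toMulEquiv φ ψ ?_ ?_⟩
  · refine Unc.hom_ext fun p => congrFun (cocycle_ext
      (Unc.isCocycle_uncPi.comp (ψ.comp φ)) (Unc.isTypeI_uncPi.comp (ψ.comp φ))
      Unc.isCocycle_uncPi Unc.isTypeI_uncPi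
      (congrArg ψ (hφ (0, 1))) (congrArg ψ (hφ (1, 0)))) p
  · exact FreeGroup.ext_hom _ _ (Fin.forall_fin_two.2 ⟨hφ (0, 1), hφ (1, 0)⟩)
end
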